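/- arXiv:1107.2108 — 4 statements merged into one kernel-verified Lean document; each statement's English description precedes it below -/
import Mathlib

section
/- Let P̃_A and P̃_B be g×g complex matrices, H a real g×g matrix, and let A, B, C, D be g×g integer matrices satisfying the symplectic relations. Assume (i) A·Im(P̃_A) + B·Im(P̃_B) = 0; (ii) C·Re(P̃_A) + D·Re(P̃_B) = ½·H·(A·Re(P̃_A) + B·Re(P̃_B)); (iii) A·Re(P̃_A) + B·Re(P̃_B) is invertible; (iv) C·Im(P̃_A) + D·Im(P̃_B) is invertible. Then Aᵀ = Im(P̃_B)·[C·Im(P̃_A) + D·Im(P̃_B)]⁻¹, Bᵀ = −Im(P̃_A)·[C·Im(P̃_A) + D·Im(P̃_B)]⁻¹, Cᵀ = ½·Aᵀ·H − Re(P̃_B)·[A·Re(P̃_A) + B·Re(P̃_B)]⁻¹, and Dᵀ = ½·Bᵀ·H + Re(P̃_A)·[A·Re(P̃_A) + B·Re(P̃_B)]⁻¹. -/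
open Matrix

/-!
The relations say that `[[A, B], [C, D]]` has inverse `[[Dᵀ, -Bᵀ], [-Cᵀ, Aᵀ]]`, so any pair
`(X, Y)` is recovered from `(U, V) = (A X + B Y, C X + D Y)` as `X = Dᵀ U - Bᵀ V`,
`Y = Aᵀ V - Cᵀ U`. With `(X, Y) = (Im P̃_A, Im P̃_B)` hypothesis (i) gives `U = 0`, and with
`(X, Y) = (Re P̃_A, Re P̃_B)` hypothesis (ii) gives `V = ½ H U`; right-multiplying by the
inverses of `V` resp. `U` yields the four formulas.
-/

/-- Real matrix obtained from an integer matrix by coercion of the entries. -/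
def intToReal {g : ℕ} (A : Matrix (Fin g) (Fin g) ℤ) : Matrix (Fin g) (Fin g) ℝ :=
  A.map (Int.cast : ℤ → ℝ)

/-- Entrywise real part of a complex matrix. -/
def reM {g : ℕ} (P : Matrix (Fin g) (Fin g) ℂ) : Matrix (Fin g) (Fin g) ℝ :=
  P.map Complex.re

/-- Entrywise imaginary part of a complex matrix. -/
def imM {g : ℕ} (P : Matrix (Fin g) (Fin g) ℂ) : Matrix (Fin g) (Fin g) ℝ :=
  P.map Complex.im

namespace Matrix

variable {n R : Type*} [Fintype n] [DecidableEq n]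

structure IsSymplecticBlocks [CommRing R] (a b c d : Matrix n n R) : Prop where
  transpose_mul_sub_transpose_mul : aᵀ * d - cᵀ * b = 1
  transpose_mul_comm_left : aᵀ * c = cᵀ * a
  transpose_mul_comm_right : dᵀ * b = bᵀ * d

namespace IsSymplecticBlocks

variable [CommRing R] {a b c d : Matrix n n R}

theorem map {S : Type*} [CommRing S] (h : IsSymplecticBlocks a b c d) (f : R →+* S) :
    IsSymplecticBlocks (a.map f) (b.map f) (c.map f) (d.map f) := by
  obtain ⟨h₁, h₂, h₃⟩ := h
  refine ⟨?_, ?_, ?_⟩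
  · rw [← transpose_map, ← transpose_map, ← Matrix.map_mul, ← Matrix.map_mul,
      ← Matrix.map_sub _ (map_sub f), h₁, Matrix.map_one _ f.map_zero f.map_one]
  · rw [← transpose_map, ← transpose_map, ← Matrix.map_mul, ← Matrix.map_mul, h₂]
  · rw [← transpose_map, ← transpose_map, ← Matrix.map_mul, ← Matrix.map_mul, h₃]

theorem transpose_mul_sub_transpose_mul' (h : IsSymplecticBlocks a b c d) :
    dᵀ * a - bᵀ * c = 1 := by
  simpa [transpose_sub, transpose_mul] using congrArg transpose h.transpose_mul_sub_transpose_mul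

theorem transpose_mul_add_eq_sub (h : IsSymplecticBlocks a b c d) (X Y : Matrix n n R) :
    bᵀ * (c * X + d * Y) = dᵀ * (a * X + b * Y) - X := by
  have expand : dᵀ * (a * X + b * Y) - bᵀ * (c * X + d * Y)
      = (dᵀ * a - bᵀ * c) * X + (dᵀ * b - bᵀ * d) * Y := by noncomm_ring
  rw [eq_sub_iff_add_eq', ← eq_sub_iff_add_eq, expand, h.transpose_mul_sub_transpose_mul',
    h.transpose_mul_comm_right, sub_self, zero_mul, add_zero, one_mul]

theorem transpose_mul_add_eq_add (h : IsSymplecticBlocks a b c d) (X Y : Matrix n n R) :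
    aᵀ * (c * X + d * Y) = cᵀ * (a * X + b * Y) + Y := by
  have expand : aᵀ * (c * X + d * Y) - cᵀ * (a * X + b * Y)
      = (aᵀ * c - cᵀ * a) * X + (aᵀ * d - cᵀ * b) * Y := by noncomm_ring
  rw [← sub_eq_iff_eq_add', expand, h.transpose_mul_sub_transpose_mul,
    h.transpose_mul_comm_left, sub_self, zero_mul, zero_add, one_mul]

end IsSymplecticBlocks

end Matrix

theorem lemma_matrix_ABCD_general
    (g : ℕ)
    (PA PB : Matrix (Fin g) (Fin g) ℂ)
    (H : Matrix (Fin g) (Fin g) ℝ)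
    (A B C D : Matrix (Fin g) (Fin g) ℤ)
    (hs1 : Aᵀ * D - Cᵀ * B = 1)
    (hs2 : Aᵀ * C = Cᵀ * A)
    (hs3 : Dᵀ * B = Bᵀ * D)
    (h1 : intToReal A * imM PA + intToReal B * imM PB = 0)
    (h2 : intToReal C * reM PA + intToReal D * reM PB
          = (1 / 2 : ℝ) • (H * (intToReal A * reM PA + intToReal B * reM PB)))
    (h3 : IsUnit (intToReal A * reM PA + intToReal B * reM PB))
    (h4 : IsUnit (intToReal C * imM PA + intToReal D * imM PB)) :
    (intToReal A)ᵀ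
        = imM PB * (intToReal C * imM PA + intToReal D * imM PB)⁻¹
    ∧ (intToReal B)ᵀ
        = -(imM PA) * (intToReal C * imM PA + intToReal D * imM PB)⁻¹
    ∧ (intToReal C)ᵀ
        = (1 / 2 : ℝ) • ((intToReal A)ᵀ * H)
          - reM PB * (intToReal A * reM PA + intToReal B * reM PB)⁻¹
    ∧ (intToReal D)ᵀ
        = (1 / 2 : ℝ) • ((intToReal B)ᵀ * H)
          + reM PA * (intToReal A * reM PA + intToReal B * reM PB)⁻¹ := by
  have hs : IsSymplecticBlocks (intToReal A) (intToReal B) (intToReal C) (intToReal D) :=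
    (IsSymplecticBlocks.mk hs1 hs2 hs3).map (Int.castRingHom ℝ)
  have hM := (isUnit_iff_isUnit_det _).mp h3
  have hN := (isUnit_iff_isUnit_det _).mp h4
  have hre_fst := hs.transpose_mul_add_eq_sub (reM PA) (reM PB)
  have hre_snd := hs.transpose_mul_add_eq_add (reM PA) (reM PB)
  have him_fst := hs.transpose_mul_add_eq_sub (imM PA) (imM PB)
  have him_snd := hs.transpose_mul_add_eq_add (imM PA) (imM PB)
  rw [h1, Matrix.mul_zero] at him_fst him_snd
  rw [h2, mul_smul_comm, ← Matrix.mul_assoc, ← smul_mul] at hre_fst hre_snd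
  refine ⟨h4.mul_left_inj.mp ?_, h4.mul_left_inj.mp ?_, h3.mul_left_inj.mp ?_,
    h3.mul_left_inj.mp ?_⟩
  · rw [nonsing_inv_mul_cancel_right _ _ hN, him_snd, zero_add]
  · rw [nonsing_inv_mul_cancel_right _ _ hN, him_fst, zero_sub]
  · rw [sub_mul, nonsing_inv_mul_cancel_right _ _ hM, hre_snd, add_sub_cancel_right]
  · rw [add_mul, nonsing_inv_mul_cancel_right _ _ hM, hre_fst, sub_add_cancel]

/-- Lemma 4.1: expressions for Aᵀ, Bᵀ, Cᵀ, Dᵀ in terms of the period matrices. -/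
theorem lemma_matrix_ABCD
    (g : ℕ) (hg : 1 ≤ g)
    (PA PB : Matrix (Fin g) (Fin g) ℂ)
    (H : Matrix (Fin g) (Fin g) ℝ)
    (A B C D : Matrix (Fin g) (Fin g) ℤ)
    (hs1 : Aᵀ * D - Cᵀ * B = 1)
    (hs2 : Aᵀ * C = Cᵀ * A)
    (hs3 : Dᵀ * B = Bᵀ * D)
    (h1 : intToReal A * imM PA + intToReal B * imM PB = 0)
    (h2 : intToReal C * reM PA + intToReal D * reM PB
          = (1 / 2 : ℝ) • (H * (intToReal A * reM PA + intToReal B * reM PB)))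
    (h3 : IsUnit (intToReal A * reM PA + intToReal B * reM PB))
    (h4 : IsUnit (intToReal C * imM PA + intToReal D * imM PB)) :
    (intToReal A)ᵀ
        = imM PB * (intToReal C * imM PA + intToReal D * imM PB)⁻¹
    ∧ (intToReal B)ᵀ
        = -(imM PA) * (intToReal C * imM PA + intToReal D * imM PB)⁻¹
    ∧ (intToReal C)ᵀ
        = (1 / 2 : ℝ) • ((intToReal A)ᵀ * H)
          - reM PB * (intToReal A * reM PA + intToReal B * reM PB)⁻¹
    ∧ (intToReal D)ᵀ
        = (1 / 2 : ℝ) • ((intToReal B)ᵀ * H)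
          + reM PA * (intToReal A * reM PA + intToReal B * reM PB)⁻¹ :=
  lemma_matrix_ABCD_general g PA PB H A B C D hs1 hs2 hs3 h1 h2 h3 h4
end

section
/- Let X and Y be real g×g matrices and let A, B, C, D be g×g integer matrices satisfying the symplectic relations. If A·X + B·Y = 0 and C·X + D·Y is invertible, then Aᵀ = Y·(C·X + D·Y)⁻¹ and Bᵀ = −X·(C·X + D·Y)⁻¹. -/
open Matrix

theorem Matrix.transpose_mul_eq_of_symplectic {n R : Type*} [Fintype n] [DecidableEq n]
    [CommRing R] {A B C D X Y : Matrix n n R}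
    (hs1 : Aᵀ * D - Cᵀ * B = 1) (hs2 : Aᵀ * C = Cᵀ * A) (hs3 : Dᵀ * B = Bᵀ * D)
    (h : A * X + B * Y = 0) :
    Aᵀ * (C * X + D * Y) = Y ∧ Bᵀ * (C * X + D * Y) = -X := by
  have hAX : A * X = -(B * Y) := eq_neg_of_add_eq_zero_left h
  have hBY : B * Y = -(A * X) := eq_neg_of_add_eq_zero_right h
  have hs1' : Dᵀ * A - Bᵀ * C = 1 := by simpa using congrArg transpose hs1
  constructor
  · calc Aᵀ * (C * X + D * Y) = Cᵀ * (A * X) + Aᵀ * D * Y := by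
          rw [← Matrix.mul_assoc Cᵀ, ← hs2]; noncomm_ring
      _ = (Aᵀ * D - Cᵀ * B) * Y := by rw [hAX]; noncomm_ring
      _ = Y := by rw [hs1, Matrix.one_mul]
  · calc Bᵀ * (C * X + D * Y) = Bᵀ * C * X + Dᵀ * (B * Y) := by
          rw [← Matrix.mul_assoc Dᵀ, hs3]; noncomm_ring
      _ = -((Dᵀ * A - Bᵀ * C) * X) := by rw [hBY]; noncomm_ring
      _ = -X := by rw [hs1', Matrix.one_mul]

theorem lemma_AB_general
    (g : ℕ)
    (X Y : Matrix (Fin g) (Fin g) ℝ)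
    (A B C D : Matrix (Fin g) (Fin g) ℤ)
    (hs1 : Aᵀ * D - Cᵀ * B = 1)
    (hs2 : Aᵀ * C = Cᵀ * A)
    (hs3 : Dᵀ * B = Bᵀ * D)
    (h1 : intToReal A * X + intToReal B * Y = 0)
    (h2 : IsUnit (intToReal C * X + intToReal D * Y)) :
    (intToReal A)ᵀ = Y * (intToReal C * X + intToReal D * Y)⁻¹
    ∧ (intToReal B)ᵀ = -X * (intToReal C * X + intToReal D * Y)⁻¹ := by
  have hs1' : (intToReal A)ᵀ * intToReal D - (intToReal C)ᵀ * intToReal B = 1 := by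
    have := congrArg (Int.castRingHom ℝ).mapMatrix hs1
    rwa [map_sub, map_mul, map_mul, map_one] at this
  have hs2' : (intToReal A)ᵀ * intToReal C = (intToReal C)ᵀ * intToReal A := by
    have := congrArg (Int.castRingHom ℝ).mapMatrix hs2
    rwa [map_mul, map_mul] at this
  have hs3' : (intToReal D)ᵀ * intToReal B = (intToReal B)ᵀ * intToReal D := by
    have := congrArg (Int.castRingHom ℝ).mapMatrix hs3
    rwa [map_mul, map_mul] at this
  have hdet := (Matrix.isUnit_iff_isUnit_det _).mp h2
  obtain ⟨hA, hB⟩ := transpose_mul_eq_of_symplectic hs1' hs2' hs3' h1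
  exact ⟨(mul_nonsing_inv_cancel_right _ _ hdet).symm.trans (congrArg (· * _) hA),
    (mul_nonsing_inv_cancel_right _ _ hdet).symm.trans (congrArg (· * _) hB)⟩

/-- First half of Lemma 4.1: expressions for Aᵀ and Bᵀ. -/
theorem lemma_AB
    (g : ℕ) (hg : 1 ≤ g)
    (X Y : Matrix (Fin g) (Fin g) ℝ)
    (A B C D : Matrix (Fin g) (Fin g) ℤ)
    (hs1 : Aᵀ * D - Cᵀ * B = 1)
    (hs2 : Aᵀ * C = Cᵀ * A)
    (hs3 : Dᵀ * B = Bᵀ * D)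
    (h1 : intToReal A * X + intToReal B * Y = 0)
    (h2 : IsUnit (intToReal C * X + intToReal D * Y)) :
    (intToReal A)ᵀ = Y * (intToReal C * X + intToReal D * Y)⁻¹
    ∧ (intToReal B)ᵀ = -X * (intToReal C * X + intToReal D * Y)⁻¹ :=
  lemma_AB_general g X Y A B C D hs1 hs2 hs3 h1 h2
end

section
/- Let U, V and H be real g×g matrices and let A, B, C, D be g×g integer matrices satisfying the symplectic relations. If C·U + D·V = ½·H·(A·U + B·V) and A·U + B·V is invertible, then Cᵀ = ½·Aᵀ·H − V·(A·U + B·V)⁻¹ and Dᵀ = ½·Bᵀ·H + U·(A·U + B·V)⁻¹. -/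
/-!
The inverse of the symplectic matrix `[[A, B], [C, D]]` is `[[Dᵀ, -Bᵀ], [-Cᵀ, Aᵀ]]`, so applying it
to the column `(A U + B V, C U + D V)` gives back `(U, V)`. Substituting the period relation for
`C U + D V` and cancelling the invertible `A U + B V` on the right yields `Cᵀ` and `Dᵀ`.
-/

open Matrix

namespace Matrix

variable {n R S : Type*} [Fintype n] [DecidableEq n] [CommRing R] [CommRing S]

/-- The relations saying that the block matrix `[[A, B], [C, D]]` is symplectic. -/
def SymplecticRelations (A B C D : Matrix n n R) : Prop :=
  Aᵀ * D - Cᵀ * B = 1 ∧ Aᵀ * C = Cᵀ * A ∧ Dᵀ * B = Bᵀ * D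

theorem eq_add_mul_nonsing_inv_of_mul_eq {X P Q M : Matrix n n R} (hM : IsUnit M)
    (h : X * M = P * M + Q) : X = P + Q * M⁻¹ := by
  have hdet := (isUnit_iff_isUnit_det M).mp hM
  rw [← mul_nonsing_inv_cancel_right M X hdet, h, Matrix.add_mul,
    mul_nonsing_inv_cancel_right M P hdet]

namespace SymplecticRelations

variable {A B C D : Matrix n n R}

theorem map (h : SymplecticRelations A B C D) (f : R →+* S) :
    SymplecticRelations (f.mapMatrix A) (f.mapMatrix B) (f.mapMatrix C) (f.mapMatrix D) := by
  have transpose_mul (X Y : Matrix n n R) :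
      (f.mapMatrix X)ᵀ * f.mapMatrix Y = f.mapMatrix (Xᵀ * Y) := by
    simp only [map_mul, RingHom.mapMatrix_apply, transpose_map]
  obtain ⟨h₁, h₂, h₃⟩ := h
  simp only [SymplecticRelations, transpose_mul, ← map_sub, h₁, h₂, h₃, map_one, and_self]

theorem transpose_mul_sub_transpose_mul (h : SymplecticRelations A B C D) :
    Dᵀ * A - Bᵀ * C = 1 := by
  simpa using congrArg transpose h.1

variable {m : Type*}

theorem transpose_lowerLeft_mul (h : SymplecticRelations A B C D) (U V : Matrix n m R) :
    Cᵀ * (A * U + B * V) = Aᵀ * (C * U + D * V) - V := by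
  have hCB : Cᵀ * B = Aᵀ * D - 1 := by rw [← h.1, sub_sub_cancel]
  simp only [Matrix.mul_add, ← Matrix.mul_assoc, ← h.2.1, hCB, Matrix.sub_mul, Matrix.one_mul]
  abel

theorem transpose_lowerRight_mul (h : SymplecticRelations A B C D) (U V : Matrix n m R) :
    Dᵀ * (A * U + B * V) = Bᵀ * (C * U + D * V) + U := by
  have hDA : Dᵀ * A = Bᵀ * C + 1 := by rw [← h.transpose_mul_sub_transpose_mul, add_sub_cancel]
  simp only [Matrix.mul_add, ← Matrix.mul_assoc, h.2.2, hDA, Matrix.add_mul, Matrix.one_mul]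
  abel

end SymplecticRelations

end Matrix

theorem lemma_CD_general
    (g : ℕ)
    (U V H : Matrix (Fin g) (Fin g) ℝ)
    (A B C D : Matrix (Fin g) (Fin g) ℤ)
    (hs1 : Aᵀ * D - Cᵀ * B = 1)
    (hs2 : Aᵀ * C = Cᵀ * A)
    (hs3 : Dᵀ * B = Bᵀ * D)
    (h1 : intToReal C * U + intToReal D * V
          = (1 / 2 : ℝ) • (H * (intToReal A * U + intToReal B * V)))
    (h2 : IsUnit (intToReal A * U + intToReal B * V)) :
    (intToReal C)ᵀ
        = (1 / 2 : ℝ) • ((intToReal A)ᵀ * H)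
          - V * (intToReal A * U + intToReal B * V)⁻¹
    ∧ (intToReal D)ᵀ
        = (1 / 2 : ℝ) • ((intToReal B)ᵀ * H)
          + U * (intToReal A * U + intToReal B * V)⁻¹ := by
  have hrel : SymplecticRelations (intToReal A) (intToReal B) (intToReal C) (intToReal D) :=
    SymplecticRelations.map ⟨hs1, hs2, hs3⟩ (Int.castRingHom ℝ)
  constructor
  · rw [sub_eq_add_neg, ← neg_mul]
    refine eq_add_mul_nonsing_inv_of_mul_eq h2 ?_
    rw [hrel.transpose_lowerLeft_mul, h1, Matrix.mul_smul, Matrix.smul_mul, Matrix.mul_assoc,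
      sub_eq_add_neg]
  · refine eq_add_mul_nonsing_inv_of_mul_eq h2 ?_
    rw [hrel.transpose_lowerRight_mul, h1, Matrix.mul_smul, Matrix.smul_mul, Matrix.mul_assoc]

/-- Second half of Lemma 4.1: expressions for Cᵀ and Dᵀ. -/
theorem lemma_CD
    (g : ℕ) (hg : 1 ≤ g)
    (U V H : Matrix (Fin g) (Fin g) ℝ)
    (A B C D : Matrix (Fin g) (Fin g) ℤ)
    (hs1 : Aᵀ * D - Cᵀ * B = 1)
    (hs2 : Aᵀ * C = Cᵀ * A)
    (hs3 : Dᵀ * B = Bᵀ * D)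
    (h1 : intToReal C * U + intToReal D * V
          = (1 / 2 : ℝ) • (H * (intToReal A * U + intToReal B * V)))
    (h2 : IsUnit (intToReal A * U + intToReal B * V)) :
    (intToReal C)ᵀ
        = (1 / 2 : ℝ) • ((intToReal A)ᵀ * H)
          - V * (intToReal A * U + intToReal B * V)⁻¹
    ∧ (intToReal D)ᵀ
        = (1 / 2 : ℝ) • ((intToReal B)ᵀ * H)
          + U * (intToReal A * U + intToReal B * V)⁻¹ :=
  lemma_CD_general g U V H A B C D hs1 hs2 hs3 h1 h2
end

section
/- Let P̃_A and P̃_B be g×g complex matrices, H a real g×g matrix, and let A, B, C, D be g×g integer matrices satisfying the symplectic relations. Assume A·Im(P̃_A) + B·Im(P̃_B) = 0, C·Re(P̃_A) + D·Re(P̃_B) = ½·H·(A·Re(P̃_A) + B·Re(P̃_B)), that A·Re(P̃_A) + B·Re(P̃_B) is invertible, and that C·Im(P̃_A) + D·Im(P̃_B) is invertible. Set M̃ = Im(P̃_B)ᵀ·Re(P̃_A) − Im(P̃_A)ᵀ·Re(P̃_B). Then M̃ is invertible and Dᵀ·B = ½·(Bᵀ·H·B − 2·Re(P̃_A)·M̃⁻¹·Im(P̃_A)ᵀ).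 -/
/-!
Write `X = A·Re P̃_A + B·Re P̃_B` and `Y = C·Im P̃_A + D·Im P̃_B`. Since `S = [[A,B],[C,D]]` is
symplectic, the form `(p, q; u, v) ↦ qᵀu − pᵀv` is `S`-invariant, and because
`A·Im P̃_A + B·Im P̃_B = 0` this gives `M̃ = Yᵀ·X`, a product of invertible matrices.
Applying `S⁻¹ = [[Dᵀ, −Bᵀ], [−Cᵀ, Aᵀ]]` recovers `Im P̃_A = −Bᵀ·Y` and, by the hypothesis on
`C·Re P̃_A + D·Re P̃_B`, `Re P̃_A = (Dᵀ − ½·Bᵀ·H)·X`. Hence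
`Re P̃_A·M̃⁻¹·Im P̃_Aᵀ = −(Dᵀ − ½·Bᵀ·H)·B`, which is the claim.
-/

open Matrix

section IntToReal

variable {g : ℕ}

theorem intToReal_eq_mapMatrix (A : Matrix (Fin g) (Fin g) ℤ) :
    intToReal A = (Int.castRingHom ℝ).mapMatrix A := rfl

theorem intToReal_mul (A B : Matrix (Fin g) (Fin g) ℤ) :
    intToReal (A * B) = intToReal A * intToReal B := by
  simp only [intToReal_eq_mapMatrix, map_mul]

theorem intToReal_sub (A B : Matrix (Fin g) (Fin g) ℤ) :
    intToReal (A - B) = intToReal A - intToReal B := by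
  simp only [intToReal_eq_mapMatrix, map_sub]

theorem intToReal_one : intToReal (1 : Matrix (Fin g) (Fin g) ℤ) = 1 := by
  simp only [intToReal_eq_mapMatrix, map_one]

theorem intToReal_transpose (A : Matrix (Fin g) (Fin g) ℤ) :
    intToReal Aᵀ = (intToReal A)ᵀ := rfl

end IntToReal

section Symplectic

variable {n R : Type*} [Fintype n] [DecidableEq n] [CommRing R] {a b c d : Matrix n n R}

theorem transpose_symplectic_relation (hs1 : aᵀ * d - cᵀ * b = 1) : dᵀ * a - bᵀ * c = 1 := by
  simpa only [transpose_sub, transpose_mul, transpose_transpose, transpose_one]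
    using congrArg transpose hs1

theorem symplectic_inv_mul_blocks (hs1 : aᵀ * d - cᵀ * b = 1) (hs3 : dᵀ * b = bᵀ * d)
    (u v : Matrix n n R) : dᵀ * (a * u + b * v) - bᵀ * (c * u + d * v) = u := by
  calc dᵀ * (a * u + b * v) - bᵀ * (c * u + d * v)
      = (dᵀ * a - bᵀ * c) * u + (dᵀ * b - bᵀ * d) * v := by noncomm_ring
    _ = u := by rw [transpose_symplectic_relation hs1, hs3, sub_self, one_mul, zero_mul, add_zero]

theorem symplectic_form_invariant (hs1 : aᵀ * d - cᵀ * b = 1) (hs2 : aᵀ * c = cᵀ * a)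
    (hs3 : dᵀ * b = bᵀ * d) (p q u v : Matrix n n R) :
    (c * p + d * q)ᵀ * (a * u + b * v) - (a * p + b * q)ᵀ * (c * u + d * v)
      = qᵀ * u - pᵀ * v := by
  calc (c * p + d * q)ᵀ * (a * u + b * v) - (a * p + b * q)ᵀ * (c * u + d * v)
      = pᵀ * (cᵀ * a - aᵀ * c) * u - pᵀ * (aᵀ * d - cᵀ * b) * v
          + qᵀ * (dᵀ * a - bᵀ * c) * u + qᵀ * (dᵀ * b - bᵀ * d) * v := by
        simp only [transpose_add, transpose_mul]; noncomm_ring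
    _ = qᵀ * u - pᵀ * v := by
        rw [hs1, transpose_symplectic_relation hs1, hs2, hs3]; noncomm_ring

end Symplectic

theorem mul_mul_inv_mul_mul_cancel {n K : Type*} [Fintype n] [DecidableEq n] [CommRing K]
    {X Y : Matrix n n K} (hX : IsUnit X) (hY : IsUnit Y) (P Q : Matrix n n K) :
    P * X * (Y * X)⁻¹ * (Y * Q) = P * Q := by
  rw [isUnit_iff_isUnit_det] at hX hY
  rw [Matrix.mul_inv_rev, ← mul_assoc, ← mul_assoc, mul_nonsing_inv_cancel_right _ _ hX,
    nonsing_inv_mul_cancel_right _ _ hY]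

theorem prop_DtB_general
    (g : ℕ)
    (PA PB : Matrix (Fin g) (Fin g) ℂ)
    (H : Matrix (Fin g) (Fin g) ℝ)
    (A B C D : Matrix (Fin g) (Fin g) ℤ)
    (hs1 : Aᵀ * D - Cᵀ * B = 1)
    (hs2 : Aᵀ * C = Cᵀ * A)
    (hs3 : Dᵀ * B = Bᵀ * D)
    (h1 : intToReal A * imM PA + intToReal B * imM PB = 0)
    (h2 : intToReal C * reM PA + intToReal D * reM PB
          = (1 / 2 : ℝ) • (H * (intToReal A * reM PA + intToReal B * reM PB)))
    (h3 : IsUnit (intToReal A * reM PA + intToReal B * reM PB))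
    (h4 : IsUnit (intToReal C * imM PA + intToReal D * imM PB)) :
    IsUnit ((imM PB)ᵀ * reM PA - (imM PA)ᵀ * reM PB)
    ∧ (intToReal D)ᵀ * intToReal B
        = (1 / 2 : ℝ) • ((intToReal B)ᵀ * H * intToReal B
            - (2 : ℝ) • (reM PA * ((imM PB)ᵀ * reM PA - (imM PA)ᵀ * reM PB)⁻¹ * (imM PA)ᵀ)) := by
  set X := intToReal A * reM PA + intToReal B * reM PB
  set Y := intToReal C * imM PA + intToReal D * imM PB
  have hs1' : (intToReal A)ᵀ * intToReal D - (intToReal C)ᵀ * intToReal B = 1 := by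
    simpa only [intToReal_sub, intToReal_mul, intToReal_transpose, intToReal_one]
      using congrArg intToReal hs1
  have hs2' : (intToReal A)ᵀ * intToReal C = (intToReal C)ᵀ * intToReal A := by
    simpa only [intToReal_mul, intToReal_transpose] using congrArg intToReal hs2
  have hs3' : (intToReal D)ᵀ * intToReal B = (intToReal B)ᵀ * intToReal D := by
    simpa only [intToReal_mul, intToReal_transpose] using congrArg intToReal hs3
  have hM : (imM PB)ᵀ * reM PA - (imM PA)ᵀ * reM PB = Yᵀ * X := by
    rw [← symplectic_form_invariant hs1' hs2' hs3', h1, transpose_zero, zero_mul, sub_zero]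
  have hIA : (imM PA)ᵀ = Yᵀ * -intToReal B := by
    have := symplectic_inv_mul_blocks hs1' hs3' (imM PA) (imM PB)
    rw [h1, mul_zero, zero_sub] at this
    rw [← this, transpose_neg, transpose_mul, transpose_transpose, mul_neg]
  have hRA : reM PA = ((intToReal D)ᵀ - (1 / 2 : ℝ) • ((intToReal B)ᵀ * H)) * X := by
    have := symplectic_inv_mul_blocks hs1' hs3' (reM PA) (reM PB)
    rw [h2] at this
    rw [← this, sub_mul, Matrix.mul_smul, Matrix.smul_mul, mul_assoc]
  have hYt : IsUnit Yᵀ := (isUnit_transpose Y).mpr h4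
  refine ⟨hM ▸ hYt.mul h3, ?_⟩
  rw [hM, hIA, hRA, mul_mul_inv_mul_mul_cancel h3 hYt]
  simp only [mul_neg, sub_mul, Matrix.smul_mul]
  module

/-- Proposition 4.1 (part for `Dᵀ·B`): with
`M̃ = Im(P̃_B)ᵀ·Re(P̃_A) − Im(P̃_A)ᵀ·Re(P̃_B)`, the matrix `M̃` is invertible and
`Dᵀ·B = ½·(Bᵀ·H·B − 2·Re(P̃_A)·M̃⁻¹·Im(P̃_A)ᵀ)`. -/
theorem prop_DtB
    (g : ℕ) (hg : 1 ≤ g)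
    (PA PB : Matrix (Fin g) (Fin g) ℂ)
    (H : Matrix (Fin g) (Fin g) ℝ)
    (A B C D : Matrix (Fin g) (Fin g) ℤ)
    (hs1 : Aᵀ * D - Cᵀ * B = 1)
    (hs2 : Aᵀ * C = Cᵀ * A)
    (hs3 : Dᵀ * B = Bᵀ * D)
    (h1 : intToReal A * imM PA + intToReal B * imM PB = 0)
    (h2 : intToReal C * reM PA + intToReal D * reM PB
          = (1 / 2 : ℝ) • (H * (intToReal A * reM PA + intToReal B * reM PB)))
    (h3 : IsUnit (intToReal A * reM PA + intToReal B * reM PB))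
    (h4 : IsUnit (intToReal C * imM PA + intToReal D * imM PB)) :
    IsUnit ((imM PB)ᵀ * reM PA - (imM PA)ᵀ * reM PB)
    ∧ (intToReal D)ᵀ * intToReal B
        = (1 / 2 : ℝ) • ((intToReal B)ᵀ * H * intToReal B
            - (2 : ℝ) • (reM PA * ((imM PB)ᵀ * reM PA - (imM PA)ᵀ * reM PB)⁻¹ * (imM PA)ᵀ)) :=
  prop_DtB_general g PA PB H A B C D hs1 hs2 hs3 h1 h2 h3 h4
end
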